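/- arXiv:1811.12863 — 3 statements merged into one kernel-verified Lean document; each statement's English description precedes it below -/
import Mathlib

section
/- For every real x in the open interval (-1,1) and every real polynomial p of degree at most n, the derivative satisfies |p'(x)| ≤ (n / sqrt(1 - x^2)) · sup_{t ∈ [-1,1]} |p(t)|. -/
/-!
M. Riesz's interpolation formula: with nodes `θₖ = (2k+1)π/(2N)` and weights
`cₖ = (-1)ᵏ / (4N sin²(θₖ/2))`, every `t(θ) = ∑_{m≤N} aₘ cos(mθ)` satisfies
`t'(θ) = ∑_{k<2N} cₖ t(θ + θₖ)`. It suffices to check this on `cos(mθ)`, `m ≤ N`, i.e. to show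
`∑ cₖ cos(mθₖ) = 0` (the reflection `θₖ ↦ 2π - θₖ` flips the sign of `cₖ`) and
`∑ cₖ sin(mθₖ) = m`. The latter sums satisfy a second-order recurrence in `m` whose forcing term
`∑ (-1)ᵏ sin(mθₖ)` vanishes for `m < N`, hence are linear in `m` up to `N`; the symmetry
`m ↦ 2N - m` fixes the slope. As `sin(Nθₖ) = (-1)ᵏ`, the case `m = N` also gives `∑ |cₖ| = N`.
Applied to `t(θ) = p(cos θ)`, whose derivative is `-sin θ p'(cos θ)`, the formula gives
`|sin θ p'(cos θ)| ≤ N sup_{[-1,1]} |p|`; put `θ = arccos x`.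
-/

open Polynomial Polynomial.Chebyshev Finset Real

noncomputable def rieszNode (N k : ℕ) : ℝ := (2 * k + 1) * π / (2 * N)

noncomputable def rieszCoeff (N k : ℕ) : ℝ := (-1) ^ k / (4 * N * sin (rieszNode N k / 2) ^ 2)

noncomputable def rieszSinSum (N m : ℕ) : ℝ :=
  ∑ k ∈ range (2 * N), rieszCoeff N k * sin (m * rieszNode N k)

section

variable {N : ℕ}

lemma sin_rieszNode_half_pos {k : ℕ} (hk : k < 2 * N) : 0 < sin (rieszNode N k / 2) := by
  have hN : (0 : ℝ) < N := by norm_cast; omega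
  have hk' : (2 * k + 1 : ℝ) < 4 * N := by norm_cast; omega
  apply sin_pos_of_pos_of_lt_pi
  · unfold rieszNode; positivity
  · rw [rieszNode, div_div, div_lt_iff₀ (by positivity)]
    nlinarith [pi_pos]

lemma natCast_mul_rieszNode (hN : N ≠ 0) (k : ℕ) : N * rieszNode N k = k * π + π / 2 := by
  unfold rieszNode; field_simp

lemma sin_natCast_mul_rieszNode (hN : N ≠ 0) (k : ℕ) : sin (N * rieszNode N k) = (-1) ^ k := by
  rw [natCast_mul_rieszNode hN, sin_add_pi_div_two, cos_nat_mul_pi]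

lemma cos_natCast_mul_rieszNode (hN : N ≠ 0) (k : ℕ) : cos (N * rieszNode N k) = 0 := by
  rw [natCast_mul_rieszNode hN, cos_add_pi_div_two, sin_nat_mul_pi, neg_zero]

lemma rieszNode_reflect {k : ℕ} (hk : k < 2 * N) :
    rieszNode N (2 * N - 1 - k) = 2 * π - rieszNode N k := by
  have hN : (N : ℝ) ≠ 0 := by norm_cast; omega
  rw [rieszNode, rieszNode, Nat.cast_sub (by omega), Nat.cast_sub (by omega)]
  push_cast
  field_simp
  ring

lemma sum_neg_one_pow_mul_sin_rieszNode {m : ℕ} (hm : m < N) :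
    ∑ k ∈ range (2 * N), (-1) ^ k * sin (m * rieszNode N k) = 0 := by
  have hN : (N : ℂ) ≠ 0 := by norm_cast; omega
  set r : ℂ := Complex.exp ((m + N) * π / N * Complex.I)
  have hterm (k : ℕ) : (-1 : ℂ) ^ k * Complex.exp ((m * rieszNode N k : ℝ) * Complex.I) =
      Complex.exp (m * π / (2 * N) * Complex.I) * r ^ k := by
    rw [← Complex.exp_pi_mul_I, ← Complex.exp_nat_mul, ← Complex.exp_nat_mul, ← Complex.exp_add,
      ← Complex.exp_add, rieszNode]
    congr 1
    push_cast
    field_simp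
    ring
  have hr : r ≠ 1 := by
    intro h
    obtain ⟨j, hj⟩ := Complex.exp_eq_one_iff.mp h
    have hj' : (m + N : ℤ) = 2 * N * j := by
      apply (@Int.cast_inj ℂ _ _).mp
      push_cast
      linear_combination (norm := (field_simp; ring_nf)) hj * (N / π / Complex.I)
    rcases le_or_gt j 0 with hj0 | hj0 <;> nlinarith
  have hr2N : r ^ (2 * N) = 1 := by
    rw [← Complex.exp_nat_mul]
    convert Complex.exp_nat_mul_two_pi_mul_I (m + N) using 2
    push_cast
    field_simp
  have hsum : ∑ k ∈ range (2 * N),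
      (-1 : ℂ) ^ k * Complex.exp ((m * rieszNode N k : ℝ) * Complex.I) = 0 := by
    rw [sum_congr rfl fun k _ => hterm k, ← mul_sum, geom_sum_eq hr, hr2N, sub_self, zero_div,
      mul_zero]
  have := congrArg Complex.im hsum
  rw [Complex.im_sum, Complex.zero_im] at this
  convert this using 2 with k
  rw [show (-1 : ℂ) ^ k = ((-1 : ℝ) ^ k : ℝ) by push_cast; rfl, Complex.im_ofReal_mul,
    Complex.exp_ofReal_mul_I_im]

lemma rieszCoeff_reflect {k : ℕ} (hk : k < 2 * N) :
    rieszCoeff N (2 * N - 1 - k) = -rieszCoeff N k := by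
  have hsign : (-1 : ℝ) ^ (2 * N - 1 - k) = -(-1) ^ k := by
    rcases Nat.even_or_odd k with hk' | hk'
    · rw [hk'.neg_one_pow, Odd.neg_one_pow (by grind)]
    · rw [hk'.neg_one_pow, Even.neg_one_pow (by grind), neg_neg]
  rw [rieszCoeff, rieszCoeff, rieszNode_reflect hk, hsign,
    show (2 * π - rieszNode N k) / 2 = π - rieszNode N k / 2 by ring, sin_pi_sub, neg_div]

lemma sum_rieszCoeff_mul_cos (m : ℕ) :
    ∑ k ∈ range (2 * N), rieszCoeff N k * cos (m * rieszNode N k) = 0 := by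
  have hodd : ∑ k ∈ range (2 * N), rieszCoeff N k * cos (m * rieszNode N k) =
      -∑ k ∈ range (2 * N), rieszCoeff N k * cos (m * rieszNode N k) := by
    conv_lhs => rw [← sum_range_reflect]
    rw [← sum_neg_distrib]
    refine sum_congr rfl fun k hk => ?_
    have hk := mem_range.mp hk
    rw [rieszCoeff_reflect hk, rieszNode_reflect hk, mul_sub, cos_nat_mul_two_pi_sub, neg_mul]
  linarith

lemma rieszCoeff_mul_sin_second_difference {k : ℕ} (hk : k < 2 * N) (m : ℕ) :
    rieszCoeff N k * sin ((m + 2 : ℕ) * rieszNode N k) -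
        2 * (rieszCoeff N k * sin ((m + 1 : ℕ) * rieszNode N k)) +
        rieszCoeff N k * sin (m * rieszNode N k) =
      -((-1) ^ k * sin ((m + 1 : ℕ) * rieszNode N k)) / N := by
  have hs := (sin_rieszNode_half_pos hk).ne'
  have hN : (N : ℝ) ≠ 0 := by norm_cast; omega
  rw [rieszCoeff]
  set u := rieszNode N k
  have hcos : cos u = 1 - 2 * sin (u / 2) ^ 2 := by
    rw [← cos_two_mul_eq_one_sub]; ring_nf
  push_cast
  rw [show ((m : ℝ) + 2) * u = (m + 1) * u + u by ring, show (m : ℝ) * u = (m + 1) * u - u by ring,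
    sin_add, sin_sub, hcos]
  field_simp
  ring

lemma rieszSinSum_add_two (m : ℕ) :
    rieszSinSum N (m + 2) = 2 * rieszSinSum N (m + 1) - rieszSinSum N m -
      (∑ k ∈ range (2 * N), (-1) ^ k * sin ((m + 1 : ℕ) * rieszNode N k)) / N := by
  have h : rieszSinSum N (m + 2) - 2 * rieszSinSum N (m + 1) + rieszSinSum N m =
      -(∑ k ∈ range (2 * N), (-1) ^ k * sin ((m + 1 : ℕ) * rieszNode N k)) / N := by
    rw [rieszSinSum, rieszSinSum, rieszSinSum, mul_sum, ← sum_sub_distrib, ← sum_add_distrib,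
      ← sum_neg_distrib, sum_div]
    exact sum_congr rfl fun k hk => rieszCoeff_mul_sin_second_difference (mem_range.mp hk) m
  rw [neg_div] at h
  linarith

lemma rieszSinSum_eq_mul : ∀ m ≤ N, rieszSinSum N m = m * rieszSinSum N 1
  | 0, _ => by simp [rieszSinSum]
  | 1, _ => by simp
  | m + 2, hm => by
    rw [rieszSinSum_add_two, sum_neg_one_pow_mul_sin_rieszNode (by omega),
      rieszSinSum_eq_mul (m + 1) (by omega), rieszSinSum_eq_mul m (by omega)]
    push_cast
    ring

lemma rieszSinSum_succ_eq_pred (hN : N ≠ 0) : rieszSinSum N (N + 1) = rieszSinSum N (N - 1) := by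
  refine sum_congr rfl fun k _ => ?_
  rw [Nat.cast_sub (by omega), Nat.cast_add_one, Nat.cast_one, add_mul, sub_mul, one_mul, sin_add,
    sin_sub, cos_natCast_mul_rieszNode hN, zero_mul, add_zero, sub_zero]

lemma rieszSinSum_one (hN : N ≠ 0) : rieszSinSum N 1 = 1 := by
  have hrec := rieszSinSum_add_two (N := N) (N - 1)
  rw [show N - 1 + 2 = N + 1 by omega, show N - 1 + 1 = N by omega, rieszSinSum_succ_eq_pred hN,
    rieszSinSum_eq_mul N le_rfl, rieszSinSum_eq_mul (N - 1) (by omega)] at hrec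
  have hG : ∑ k ∈ range (2 * N), (-1 : ℝ) ^ k * sin (N * rieszNode N k) = 2 * N := by
    simp [sin_natCast_mul_rieszNode hN, ← pow_add, ← two_mul, pow_mul]
  have hN' : (N : ℝ) ≠ 0 := by exact_mod_cast hN
  rw [hG, Nat.cast_sub (by omega), mul_div_cancel_right₀ _ hN'] at hrec
  push_cast at hrec
  linarith

lemma rieszSinSum_eq (hN : N ≠ 0) {m : ℕ} (hm : m ≤ N) : rieszSinSum N m = m := by
  rw [rieszSinSum_eq_mul m hm, rieszSinSum_one hN, mul_one]

lemma sum_abs_rieszCoeff (hN : N ≠ 0) : ∑ k ∈ range (2 * N), |rieszCoeff N k| = N := by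
  rw [← rieszSinSum_eq hN le_rfl]
  refine sum_congr rfl fun k hk => ?_
  have hs := sin_rieszNode_half_pos (mem_range.mp hk)
  rw [sin_natCast_mul_rieszNode hN, rieszCoeff, abs_div, abs_pow, abs_neg, abs_one, one_pow,
    abs_of_pos (by positivity), div_mul_eq_mul_div, ← pow_add, ← two_mul, pow_mul, neg_one_sq,
    one_pow]

lemma sin_mul_eval_derivative_T_cos (m : ℕ) (θ : ℝ) :
    sin θ * (derivative (T ℝ m)).eval (cos θ) = m * sin (m * θ) := by
  have h := U_real_cos θ (m - 1 : ℤ)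
  push_cast at h
  rw [T_derivative_eq_U, eval_mul, mul_left_comm, mul_comm (sin θ), h]
  simp

lemma sum_rieszCoeff_mul_eval_T_cos_add (hN : N ≠ 0) {m : ℕ} (hm : m ≤ N) (θ : ℝ) :
    ∑ k ∈ range (2 * N), rieszCoeff N k * (T ℝ m).eval (cos (θ + rieszNode N k)) =
      -(m * sin (m * θ)) := by
  have hsplit (k : ℕ) : rieszCoeff N k * (T ℝ m).eval (cos (θ + rieszNode N k)) =
      cos (m * θ) * (rieszCoeff N k * cos (m * rieszNode N k)) -
        sin (m * θ) * (rieszCoeff N k * sin (m * rieszNode N k)) := by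
    rw [T_real_cos, Int.cast_natCast, mul_add, cos_add]
    ring
  simp_rw [hsplit]
  rw [sum_sub_distrib, ← mul_sum, ← mul_sum, sum_rieszCoeff_mul_cos, ← rieszSinSum,
    rieszSinSum_eq hN hm]
  ring

theorem sum_rieszCoeff_mul_eval_cos_add (hN : N ≠ 0) {p : ℝ[X]} (hp : p ∈ degreeLE ℝ N)
    (θ : ℝ) :
    ∑ k ∈ range (2 * N), rieszCoeff N k * p.eval (cos (θ + rieszNode N k)) =
      -(sin θ * (derivative p).eval (cos θ)) := by
  let L : ℝ[X] →ₗ[ℝ] ℝ := ∑ k ∈ range (2 * N), rieszCoeff N k • leval (cos (θ + rieszNode N k)) +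
    sin θ • (leval (cos θ)).comp derivative
  have hL (q : ℝ[X]) :
      L q = ∑ k ∈ range (2 * N), rieszCoeff N k * q.eval (cos (θ + rieszNode N k)) +
        sin θ * (derivative q).eval (cos θ) := by
    simp [L]
  suffices degreeLE ℝ N ≤ LinearMap.ker L by
    linarith [hL p, LinearMap.mem_ker.mp (this hp)]
  rw [← (chebyshevTsequence ℝ).span_degreeLE fun i _ => by simp [chebyshevTsequence],
    Submodule.span_le]
  rintro _ ⟨m, hm, rfl⟩
  rw [SetLike.mem_coe, LinearMap.mem_ker, hL]
  change ∑ k ∈ range (2 * N), rieszCoeff N k * (T ℝ m).eval (cos (θ + rieszNode N k)) +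
    sin θ * (derivative (T ℝ m)).eval (cos θ) = 0
  rw [sum_rieszCoeff_mul_eval_T_cos_add hN hm, sin_mul_eval_derivative_T_cos, neg_add_cancel]

end

theorem abs_sin_mul_eval_derivative_cos_le {N : ℕ} {p : ℝ[X]} (hp : p.natDegree ≤ N) {M : ℝ}
    (hM : ∀ t ∈ Set.Icc (-1 : ℝ) 1, |p.eval t| ≤ M) (θ : ℝ) :
    |sin θ * (derivative p).eval (cos θ)| ≤ N * M := by
  rcases eq_or_ne N 0 with rfl | hN
  · rw [eq_C_of_natDegree_le_zero hp, derivative_C]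
    simp
  rw [← abs_neg, ← sum_rieszCoeff_mul_eval_cos_add hN
    (mem_degreeLE.mpr (degree_le_of_natDegree_le hp)), ← sum_abs_rieszCoeff hN, sum_mul]
  refine (abs_sum_le_sum_abs _ _).trans (sum_le_sum fun k _ => ?_)
  rw [abs_mul]
  exact mul_le_mul_of_nonneg_left (hM _ ⟨neg_one_le_cos _, cos_le_one _⟩) (abs_nonneg _)

/-- Classical Bernstein polynomial inequality on `[-1,1]`. -/
theorem bernstein_inequality (n : ℕ) (p : Polynomial ℝ) (hp : p.natDegree ≤ n)
    (x : ℝ) (hx : x ∈ Set.Ioo (-1 : ℝ) 1) :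
    |p.derivative.eval x| ≤
      (n / Real.sqrt (1 - x ^ 2)) * sSup ((fun t => |p.eval t|) '' Set.Icc (-1 : ℝ) 1) := by
  have hbdd : BddAbove ((fun t => |p.eval t|) '' Set.Icc (-1 : ℝ) 1) :=
    (isCompact_Icc.image p.continuous.abs).bddAbove
  have hsqrt : 0 < √(1 - x ^ 2) := sqrt_pos.mpr (by nlinarith [hx.1, hx.2])
  have key := abs_sin_mul_eval_derivative_cos_le hp (fun t ht => le_csSup hbdd ⟨t, ht, rfl⟩)
    (arccos x)
  rw [sin_arccos, cos_arccos hx.1.le hx.2.le, abs_mul, abs_of_pos hsqrt] at key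
  rw [div_mul_eq_mul_div, le_div_iff₀ hsqrt]
  linarith
end

section
/- For every l > 0, the quantity c(l) := (1/(π² √(1+l²))) · ∫_{1}^{√(1+l²)} arccos(1/r) dr is strictly positive, and moreover ∫_{1}^{√(1+l²)} dr/(r(π - arccos(1/r))) - (1/π) log √(1+l²) ≥ c(l). -/
/-!
Since `a < p` gives `1/(p - a) - 1/p - a/p² = a²/(p²(p - a)) ≥ 0`, the integrand satisfies
`1/(r(π - θ(r))) ≥ 1/(πr) + θ(r)/(π²r) ≥ 1/(πr) + θ(r)/(π²R)` on `[1, R]`, where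
`θ(r) = arccos(1/r) ∈ [0, π/2]` and `R = √(1+l²)`. Integrating, the `1/(πr)` term produces
`(1/π) log R`. Positivity of `c(l)` holds because `θ > 0` on `(1, R]`.
-/

open Real Set

lemma one_div_add_div_sq_le_one_div_sub {p a : ℝ} (hp : 0 < p) (hap : a < p) :
    1 / p + a / p ^ 2 ≤ 1 / (p - a) := by
  have hpa : 0 < p - a := sub_pos.2 hap
  rw [div_add_div _ _ hp.ne' (by positivity), div_le_div_iff₀ (by positivity) hpa]
  nlinarith [sq_nonneg a]

lemma one_div_mul_sub_ge {p a r R : ℝ} (hp : 0 < p) (ha : 0 ≤ a) (hap : a < p)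
    (hr : 0 < r) (hrR : r ≤ R) :
    1 / p * (1 / r) + 1 / (p ^ 2 * R) * a ≤ 1 / (r * (p - a)) := calc
  1 / p * (1 / r) + 1 / (p ^ 2 * R) * a ≤ 1 / p * (1 / r) + a / p ^ 2 * (1 / r) := by
    rw [show 1 / (p ^ 2 * R) * a = a / p ^ 2 * (1 / R) by ring]
    gcongr
  _ = (1 / p + a / p ^ 2) * (1 / r) := by ring
  _ ≤ 1 / (p - a) * (1 / r) := by gcongr; exact one_div_add_div_sq_le_one_div_sub hp hap
  _ = 1 / (r * (p - a)) := by rw [one_div_mul_one_div, mul_comm]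

theorem integral_one_div_mul_sub_ge {f : ℝ → ℝ} {p a b : ℝ} (hp : 0 < p) (ha : 0 < a)
    (hab : a ≤ b) (hf : ContinuousOn f (Icc a b)) (hf0 : ∀ r ∈ Icc a b, 0 ≤ f r)
    (hfp : ∀ r ∈ Icc a b, f r < p) :
    1 / p * log (b / a) + 1 / (p ^ 2 * b) * ∫ r in a..b, f r ≤
      ∫ r in a..b, 1 / (r * (p - f r)) := by
  have hpos : ∀ r ∈ Icc a b, 0 < r := fun r hr => ha.trans_le hr.1
  have hzero : (0 : ℝ) ∉ uIcc a b := by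
    rw [uIcc_of_le hab]; exact fun h => (hpos 0 h).false
  have hinv : IntervalIntegrable (fun r : ℝ => 1 / r) MeasureTheory.volume a b :=
    (continuousOn_const.div continuousOn_id fun r hr => (hpos r hr).ne').intervalIntegrable_of_Icc
      hab
  have hfi : IntervalIntegrable f MeasureTheory.volume a b := hf.intervalIntegrable_of_Icc hab
  have hg : IntervalIntegrable (fun r => 1 / (r * (p - f r))) MeasureTheory.volume a b := by
    refine (continuousOn_const.div (continuousOn_id.mul (continuousOn_const.sub hf))
      fun r hr => ?_).intervalIntegrable_of_Icc hab
    exact (mul_pos (hpos r hr) (sub_pos.2 (hfp r hr))).ne'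
  calc 1 / p * log (b / a) + 1 / (p ^ 2 * b) * ∫ r in a..b, f r
      = ∫ r in a..b, (1 / p * (1 / r) + 1 / (p ^ 2 * b) * f r) := by
        rw [intervalIntegral.integral_add (hinv.const_mul _) (hfi.const_mul _),
          intervalIntegral.integral_const_mul, intervalIntegral.integral_const_mul,
          integral_one_div hzero]
    _ ≤ ∫ r in a..b, 1 / (r * (p - f r)) :=
        intervalIntegral.integral_mono_on hab ((hinv.const_mul _).add (hfi.const_mul _)) hg
          fun r hr => one_div_mul_sub_ge hp (hf0 r hr) (hfp r hr) (hpos r hr) hr.2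

lemma continuousOn_arccos_one_div : ContinuousOn (fun r : ℝ => arccos (1 / r)) (Ici 1) :=
  continuous_arccos.comp_continuousOn <|
    continuousOn_const.div continuousOn_id fun _ hr => (zero_lt_one.trans_le hr).ne'

lemma arccos_one_div_le_pi_div_two {r : ℝ} (hr : 0 ≤ r) : arccos (1 / r) ≤ π / 2 :=
  arccos_le_pi_div_two.2 (by positivity)

lemma integral_arccos_one_div_pos {R : ℝ} (hR : 1 < R) : 0 < ∫ r in (1 : ℝ)..R, arccos (1 / r) :=
  intervalIntegral.intervalIntegral_pos_of_pos_on
    ((continuousOn_arccos_one_div.mono Icc_subset_Ici_self).intervalIntegrable_of_Icc hR.le)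
    (fun _ hr => arccos_pos.2 ((div_lt_one (zero_lt_one.trans hr.1)).2 hr.1)) hR

/-- For every `l > 0`, `c(l) > 0` and the module lower bound
`∫_1^{√(1+l²)} dr/(r(π - arccos(1/r))) - (1/π) log √(1+l²) ≥ c(l)` holds. -/
theorem module_lower_bound (l : ℝ) (hl : 0 < l) :
    0 < (1 / (π ^ 2 * Real.sqrt (1 + l ^ 2))) *
        (∫ r in (1 : ℝ)..Real.sqrt (1 + l ^ 2), Real.arccos (1 / r)) ∧
    (∫ r in (1 : ℝ)..Real.sqrt (1 + l ^ 2), 1 / (r * (π - Real.arccos (1 / r)))) -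
        (1 / π) * Real.log (Real.sqrt (1 + l ^ 2)) ≥
      (1 / (π ^ 2 * Real.sqrt (1 + l ^ 2))) *
        (∫ r in (1 : ℝ)..Real.sqrt (1 + l ^ 2), Real.arccos (1 / r)) := by
  set R := Real.sqrt (1 + l ^ 2)
  have h1R : 1 < R := by
    simpa using Real.sqrt_lt_sqrt zero_le_one (lt_add_of_pos_right 1 (pow_pos hl 2))
  refine ⟨mul_pos (by positivity) (integral_arccos_one_div_pos h1R), ?_⟩
  have key := integral_one_div_mul_sub_ge pi_pos zero_lt_one h1R.le
    (continuousOn_arccos_one_div.mono Icc_subset_Ici_self) (fun _ _ => arccos_nonneg _)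
    fun _ hr => (arccos_one_div_le_pi_div_two (zero_le_one.trans hr.1)).trans_lt
      (half_lt_self pi_pos)
  rw [div_one] at key
  linarith
end

section
/- Let u : upper half-plane → ℝ be given by the Poisson integral u(x₀ + iy) = (y/π) ∫_{-∞}^{∞} φ(x) dx/((x - x₀)² + y²) of a nonnegative measurable boundary function φ : ℝ → ℝ. Suppose φ(x) ≤ ε δ₁ for all x ∈ ℝ, and ∫_{|x - x₀| < δ₁} φ(x)/(x - x₀)² dx < ε, where ε, δ₁ > 0. Then for every y > 0, u(x₀ + iy) < y ε (1 + 2/π) and in particular limsup_{y → 0⁺} u(x₀ + iy)/y ≤ ε(1 + 2/π). -/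
/-!
Near `x₀` drop `y²` from the denominator, which leaves the small integral of `φ/(x-x₀)²`.
Away from `x₀` bound `φ` by `ε δ₁` and the kernel by `1/(x-x₀)²`, whose integral over
`|x - x₀| ≥ δ₁` is `2/δ₁`. So `∫ φ/((x-x₀)²+y²) < ε + 2ε`, and multiplying by `y/π` with `π ≥ 1`
gives `u(y) < y ε (1 + 2/π)`; the `limsup` bound follows since `u(y)/y ≥ 0`.
-/

open Real MeasureTheory Filter

open Set

theorem integral_Ici_inv_sq {d : ℝ} (hd : 0 < d) : ∫ t in Ici d, (t ^ 2)⁻¹ = d⁻¹ := by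
  rw [integral_Ici_eq_integral_Ioi]
  calc ∫ t in Ioi d, (t ^ 2)⁻¹ = ∫ t in Ioi d, t ^ (-2 : ℝ) :=
        setIntegral_congr_fun measurableSet_Ioi fun t ht => by
          rw [rpow_neg (hd.trans ht).le, rpow_two]
    _ = d⁻¹ := by rw [integral_Ioi_rpow_of_lt (by norm_num) hd]; norm_num [rpow_neg_one]

theorem integral_indicator_le_abs_sub_inv_sq (a : ℝ) {d : ℝ} (hd : 0 < d) :
    ∫ x, {x | d ≤ |x - a|}.indicator (fun x => ((x - a) ^ 2)⁻¹) x = 2 / d := by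
  set g : ℝ → ℝ := (Ici d).indicator fun t => (t ^ 2)⁻¹
  have hg : ∀ x, {x | d ≤ |x - a|}.indicator (fun x => ((x - a) ^ 2)⁻¹) x = g |x - a| := by
    intro x
    simp only [g, indicator, mem_ofPred_eq, mem_Ici, sq_abs]
  have hg_Ioi : ∫ t in Ioi 0, g t = d⁻¹ := by
    rw [integral_indicator measurableSet_Ici, Measure.restrict_restrict measurableSet_Ici,
      inter_eq_left.mpr (Ici_subset_Ioi.mpr hd), integral_Ici_inv_sq hd]
  simp_rw [hg]
  rw [integral_sub_right_eq_self (fun x => g |x|) a, integral_comp_abs, hg_Ioi, div_eq_mul_inv]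

theorem integrable_indicator_le_abs_sub_inv_sq (a : ℝ) {d : ℝ} (hd : 0 < d) :
    Integrable ({x | d ≤ |x - a|}.indicator fun x => ((x - a) ^ 2)⁻¹) :=
  Integrable.of_integral_ne_zero <| by
    rw [integral_indicator_le_abs_sub_inv_sq a hd]; positivity

theorem integral_div_sq_add_sq_le {φ : ℝ → ℝ} {a d M : ℝ} (hd : 0 < d) (hφ0 : ∀ x, 0 ≤ φ x)
    (hφM : ∀ x, φ x ≤ M) (hint : IntegrableOn (fun x => φ x / (x - a) ^ 2) {x | |x - a| < d})
    (y : ℝ) :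
    ∫ x, φ x / ((x - a) ^ 2 + y ^ 2) ≤
      (∫ x in {x | |x - a| < d}, φ x / (x - a) ^ 2) + M * (2 / d) := by
  set near := {x | |x - a| < d}
  set far := {x | d ≤ |x - a|}
  have hnear : MeasurableSet near := measurableSet_lt (by fun_prop) measurable_const
  have hint_near : Integrable (near.indicator fun x => φ x / (x - a) ^ 2) :=
    (integrable_indicator_iff hnear).mpr hint
  have hint_far := (integrable_indicator_le_abs_sub_inv_sq a hd).const_mul M
  have hpointwise : ∀ᵐ x, φ x / ((x - a) ^ 2 + y ^ 2) ≤
      near.indicator (fun x => φ x / (x - a) ^ 2) x +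
        M * far.indicator (fun x => ((x - a) ^ 2)⁻¹) x := by
    filter_upwards [volume.ae_ne a] with x hx
    have hsq : 0 < (x - a) ^ 2 := by positivity [sub_ne_zero.mpr hx]
    have hdrop_y : φ x / ((x - a) ^ 2 + y ^ 2) ≤ φ x / (x - a) ^ 2 :=
      div_le_div_of_nonneg_left (hφ0 x) hsq (le_add_of_nonneg_right (sq_nonneg y))
    by_cases hx_near : x ∈ near
    · have hx_far : x ∉ far := not_le.mpr (show |x - a| < d from hx_near)
      simpa [indicator_of_mem hx_near, indicator_of_notMem hx_far] using hdrop_y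
    · have hx_far : x ∈ far := not_lt.mp (show ¬|x - a| < d from hx_near)
      rw [indicator_of_notMem hx_near, indicator_of_mem hx_far, zero_add, ← div_eq_mul_inv]
      exact hdrop_y.trans (div_le_div_of_nonneg_right (hφM x) hsq.le)
  calc ∫ x, φ x / ((x - a) ^ 2 + y ^ 2)
      ≤ ∫ x, (near.indicator (fun x => φ x / (x - a) ^ 2) x +
          M * far.indicator (fun x => ((x - a) ^ 2)⁻¹) x) :=
        integral_mono_of_nonneg (.of_forall fun x => by have := hφ0 x; positivity)
          (hint_near.add hint_far) hpointwise
    _ = (∫ x in near, φ x / (x - a) ^ 2) + M * (2 / d) := by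
        rw [integral_add hint_near hint_far, integral_indicator hnear, integral_const_mul,
          integral_indicator_le_abs_sub_inv_sq a hd]

theorem poisson_estimate_general (x₀ ε δ₁ : ℝ) (hε : 0 < ε) (hδ₁ : 0 < δ₁)
    (φ : ℝ → ℝ) (hφ0 : ∀ x, 0 ≤ φ x)
    (hφb : ∀ x, φ x ≤ ε * δ₁)
    (hint : IntegrableOn (fun x => φ x / (x - x₀) ^ 2) {x | |x - x₀| < δ₁})
    (hsmall : (∫ x in {x | |x - x₀| < δ₁}, φ x / (x - x₀) ^ 2) < ε)
    (u : ℝ → ℝ)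
    (hu : ∀ y, u y = (y / π) * ∫ x, φ x / ((x - x₀) ^ 2 + y ^ 2)) :
    (∀ y : ℝ, 0 < y → u y < y * ε * (1 + 2 / π)) ∧
      limsup (fun y => u y / y) (nhdsWithin 0 (Set.Ioi 0)) ≤ ε * (1 + 2 / π) := by
  have hbound (y : ℝ) (hy : 0 < y) : u y < y * ε * (1 + 2 / π) := by
    have hI : ∫ x, φ x / ((x - x₀) ^ 2 + y ^ 2) < ε + 2 * ε := by
      have hfar : ε * δ₁ * (2 / δ₁) = 2 * ε := by field_simp
      linarith [integral_div_sq_add_sq_le hδ₁ hφ0 hφb hint y]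
    calc u y = y / π * ∫ x, φ x / ((x - x₀) ^ 2 + y ^ 2) := hu y
      _ < y / π * (ε + 2 * ε) := by gcongr
      _ = y * ε / π + y * ε * (2 / π) := by ring
      _ ≤ y * ε + y * ε * (2 / π) := by
        gcongr
        exact div_le_self (by positivity) (by linarith [pi_gt_three])
      _ = y * ε * (1 + 2 / π) := by ring
  refine ⟨hbound, limsup_le_of_le (isCoboundedUnder_le_of_eventually_le _ (x := 0) ?_) ?_⟩
  · filter_upwards [self_mem_nhdsWithin] with y (hy : 0 < y)
    have : 0 ≤ ∫ x, φ x / ((x - x₀) ^ 2 + y ^ 2) :=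
      integral_nonneg fun x => by have := hφ0 x; positivity
    rw [hu]
    positivity
  · filter_upwards [self_mem_nhdsWithin] with y (hy : 0 < y)
    rw [div_le_iff₀ hy, mul_comm _ y, ← mul_assoc]
    exact (hbound y hy).le

/-- Poisson-integral estimate: if the nonnegative boundary function `φ` is bounded by `ε δ₁`
and `∫_{|x-x₀|<δ₁} φ(x)/(x-x₀)² dx < ε`, then the Poisson extension satisfies
`u(x₀+iy) < y ε (1 + 2/π)` for all `y > 0`, and `limsup_{y→0⁺} u(x₀+iy)/y ≤ ε(1+2/π)`. -/
theorem poisson_estimate (x₀ ε δ₁ : ℝ) (hε : 0 < ε) (hδ₁ : 0 < δ₁)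
    (φ : ℝ → ℝ) (hφm : Measurable φ) (hφ0 : ∀ x, 0 ≤ φ x)
    (hφb : ∀ x, φ x ≤ ε * δ₁)
    (hint : IntegrableOn (fun x => φ x / (x - x₀) ^ 2) {x | |x - x₀| < δ₁})
    (hsmall : (∫ x in {x | |x - x₀| < δ₁}, φ x / (x - x₀) ^ 2) < ε)
    (u : ℝ → ℝ)
    (hu : ∀ y, u y = (y / π) * ∫ x, φ x / ((x - x₀) ^ 2 + y ^ 2)) :
    (∀ y : ℝ, 0 < y → u y < y * ε * (1 + 2 / π)) ∧
      limsup (fun y => u y / y) (nhdsWithin 0 (Set.Ioi 0)) ≤ ε * (1 + 2 / π) :=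
  poisson_estimate_general x₀ ε δ₁ hε hδ₁ φ hφ0 hφb hint hsmall u hu
end
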